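/- arXiv:2411.08426 — 4 statements merged into one kernel-verified Lean document; each statement's English description precedes it below -/
import Mathlib

section
/- The strict Caylerian polynomial is the reverse of the weak Caylerian polynomial: for n ≥ 1, C°_n(t) = t^(n-1) · C_n(1/t), as an identity of Laurent polynomials (equivalently, the coefficient of t^k in C°_n equals the coefficient of t^(n-1-k) in C_n). -/
open Finset

def IsCayley {n : ℕ} (w : Fin n → ℕ) : Prop :=
  ∃ k ≤ n, Set.range w = Set.Icc 1 k

def desW {n : ℕ} (w : Fin n → ℕ) : ℕ :=
  (Finset.univ.filter (fun i : Fin (n - 1) =>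
    w ⟨i.val + 1, by have := i.isLt; omega⟩ ≤ w ⟨i.val, by have := i.isLt; omega⟩)).card

def desS {n : ℕ} (w : Fin n → ℕ) : ℕ :=
  (Finset.univ.filter (fun i : Fin (n - 1) =>
    w ⟨i.val + 1, by have := i.isLt; omega⟩ < w ⟨i.val, by have := i.isLt; omega⟩)).card

lemma IsCayley.comp_surjective {n : ℕ} {w : Fin n → ℕ} (h : IsCayley w) {σ : Fin n → Fin n}
    (hσ : σ.Surjective) : IsCayley (w ∘ σ) := by
  obtain ⟨m, hm, hrange⟩ := h
  exact ⟨m, hm, by rw [Set.range_comp, hσ.range_eq, Set.image_univ, hrange]⟩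

lemma Fin.card_filter_rev {n : ℕ} (p : Fin n → Prop) [DecidablePred p] :
    #{i | p (Fin.rev i)} = #{i | p i} :=
  card_nbij' Fin.rev Fin.rev (fun i => by simp) (fun i => by simp) (fun i _ => i.rev_rev)
    (fun i _ => i.rev_rev)

/-- Reversal turns strict descents into strict ascents, which are exactly the non-weak-descents. -/
lemma desS_comp_rev_add_desW {n : ℕ} (w : Fin n → ℕ) : desS (w ∘ Fin.rev) + desW w = n - 1 := by
  have hascent : ∀ i ∈ (univ : Finset (Fin (n - 1))),
      (w ∘ Fin.rev) ⟨i + 1, by omega⟩ < (w ∘ Fin.rev) ⟨i, by omega⟩ ↔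
        ¬ w ⟨i.rev + 1, by omega⟩ ≤ w ⟨i.rev, by omega⟩ := by
    intro i _
    rw [not_le, Function.comp_apply, Function.comp_apply]
    apply Iff.of_eq
    congr 2 <;> ext <;> simp only [Fin.val_rev] <;> omega
  unfold desS desW
  rw [filter_congr hascent,
    Fin.card_filter_rev (fun j : Fin (n - 1) => ¬ w ⟨j + 1, by omega⟩ ≤ w ⟨j, by omega⟩),
    add_comm, card_filter_add_card_filter_not, card_univ, Fintype.card_fin]

lemma Fin.comp_rev_involutive (α : Type*) (n : ℕ) :
    Function.Involutive (fun w : Fin n → α => w ∘ Fin.rev) :=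
  fun w => funext fun i => by simp

theorem strict_caylerian_reverse_general (n : ℕ) (k : ℕ) (hk : k ≤ n - 1) :
    Set.ncard {w : Fin n → ℕ | IsCayley w ∧ desS w = k} =
      Set.ncard {w : Fin n → ℕ | IsCayley w ∧ desW w = n - 1 - k} := by
  have hrev := Fin.comp_rev_involutive ℕ n
  have hswap : {w : Fin n → ℕ | IsCayley w ∧ desS w = k} =
      (· ∘ Fin.rev) '' {w : Fin n → ℕ | IsCayley w ∧ desW w = n - 1 - k} := by
    rw [Set.image_eq_preimage_of_inverse hrev.leftInverse hrev.rightInverse]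
    ext w
    have hww : (w ∘ Fin.rev) ∘ Fin.rev = w := hrev w
    have hdes := desS_comp_rev_add_desW (w ∘ Fin.rev)
    rw [hww] at hdes
    simp only [Set.mem_ofPred_eq, Set.mem_preimage]
    constructor
    · rintro ⟨hw, rfl⟩
      exact ⟨hw.comp_surjective Fin.rev_surjective, by omega⟩
    · rintro ⟨hw, hd⟩
      exact ⟨by simpa only [hww] using hw.comp_surjective Fin.rev_surjective, by omega⟩
  rw [hswap, Set.ncard_image_of_injective _ hrev.injective]

theorem strict_caylerian_reverse (n : ℕ) (hn : 1 ≤ n) (k : ℕ) (hk : k ≤ n - 1) :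
    Set.ncard {w : Fin n → ℕ | IsCayley w ∧ desS w = k} =
      Set.ncard {w : Fin n → ℕ | IsCayley w ∧ desW w = n - 1 - k} :=
  strict_caylerian_reverse_general n k hk
end

section
/- For all m, n ≥ 0: n! · |Genmat_m[n]| = Σ_{k=0}^{n} c(n,k) · m^k · fub(k), where c(n,k) is the unsigned Stirling number of the first kind and fub(k) is the k-th Fubini number. -/
open Finset

noncomputable def fubini (n : ℕ) : ℕ :=
  Set.ncard {L : List (Finset (Fin n)) |
    (∀ B ∈ L, B.Nonempty) ∧ L.Pairwise Disjoint ∧ ∀ x, ∃ B ∈ L, x ∈ B}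

noncomputable def stirling1 (n k : ℕ) : ℕ :=
  Set.ncard {σ : Equiv.Perm (Fin n) |
    (n - σ.support.card) + Multiset.card σ.cycleType = k}

noncomputable def GenmatCard (m n : ℕ) : ℕ :=
  Set.ncard {p : Σ k : ℕ, Matrix (Fin m) (Fin k) ℕ |
    (∑ i, ∑ j, p.2 i j) = n ∧ ∀ j, ∃ i, 0 < p.2 i j}

/-!
Both sides count, over all `k ≤ n`, the pairs `(σ, g)` of a permutation `σ` of `[n]` and a map
`g : [n] → [m] × [k]` with surjective second component such that `g ∘ σ = g`; this is
Burnside's lemma for `S_n` acting on such maps by precomposition. Two maps lie in one orbit iff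
their fibres have the same sizes, so orbits are the matrices `(#g⁻¹(i, j))`, i.e. the elements
of `Genmat_m[n]` with `k` columns, and the orbit side is `n! · |Genmat_m[n]|`. A map fixed by `σ`
is a map on the `c(σ)` cycles of `σ`: a colouring of them by `[m]` together with a surjection
onto `[k]`. Summing over `k`, the surjections `[c] → [k]` give `fub(c)`, since an ordered set
partition is the list of fibres of a surjection.
-/

open Function MulAction Equiv
open scoped Nat

section FiberCard

variable {α β : Type*} [Fintype α] [DecidableEq β]

theorem card_fiber_comp_perm (f : α → β) (σ : Perm α) (b : β) :
    #{a | f (σ a) = b} = #{a | f a = b} :=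
  card_equiv σ (by simp)

theorem exists_perm_comp_eq_of_card_fiber_eq {f g : α → β}
    (h : ∀ b, #{a | f a = b} = #{a | g a = b}) : ∃ σ : Perm α, g ∘ σ = f := by
  have hfib : ∀ b, Fintype.card {a // f a = b} = Fintype.card {a // g a = b} := by
    simpa only [Fintype.card_subtype] using h
  let τ b := Fintype.equivOfCardEq (hfib b)
  refine ⟨(sigmaFiberEquiv f).symm.trans ((sigmaCongrRight τ).trans (sigmaFiberEquiv g)), ?_⟩
  funext a
  exact (τ (f a) ⟨a, rfl⟩).2

theorem exists_card_fiber_eq [Fintype β] (c : β → ℕ) (hc : ∑ b, c b = Fintype.card α) :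
    ∃ f : α → β, ∀ b, #{a | f a = b} = c b := by
  obtain e : α ≃ Σ b, Fin (c b) := Fintype.equivOfCardEq (by simp [hc])
  refine ⟨fun a => (e a).1, fun b => ?_⟩
  rw [← Fintype.card_subtype, ← Fintype.card_fin (c b)]
  exact Fintype.card_congr ((e.subtypeEquiv fun _ => Iff.rfl).trans (sigmaSubtype b))

end FiberCard

namespace Equiv.Perm

variable {α : Type*} [Fintype α] [DecidableEq α]

-- A `SameCycle` class is either a fixed point or the support of a cycle factor.
def cycleKey (σ : Perm α) (x : α) : fixedPoints σ ⊕ σ.cycleFactorsFinset :=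
  if hx : x ∈ σ.support then .inr ⟨σ.cycleOf x, cycleOf_mem_cycleFactorsFinset_iff.2 hx⟩
  else .inl ⟨x, notMem_support.1 hx⟩

theorem cycleKey_eq_iff {σ : Perm α} {x y : α} :
    σ.cycleKey x = σ.cycleKey y ↔ σ.SameCycle x y := by
  by_cases hx : x ∈ σ.support <;> by_cases hy : y ∈ σ.support <;>
    simp only [cycleKey, hx, hy, dite_true, dite_false, Sum.inr.injEq, Sum.inl.injEq,
      reduceCtorEq, Subtype.mk.injEq, false_iff]
  · exact (sameCycle_iff_cycleOf_eq_of_mem_support hx hy).symm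
  · exact fun h => hy (h.mem_support_iff.1 hx)
  · exact fun h => hx (h.mem_support_iff.2 hy)
  · rw [Subtype.ext_iff]
    exact ⟨by rintro rfl; rfl, fun h => h.eq_of_left (notMem_support.1 hx)⟩

theorem cycleKey_surjective (σ : Perm α) : Surjective σ.cycleKey := by
  rintro (⟨x, hx⟩ | ⟨c, hc⟩)
  · exact ⟨x, by simp [cycleKey, notMem_support.2 hx]⟩
  · obtain ⟨x, hxc⟩ := (mem_cycleFactorsFinset_iff.1 hc).1.nonempty_support
    have hx : x ∈ σ.support := mem_cycleFactorsFinset_support_le hc hxc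
    exact ⟨x, by simp [cycleKey, hx, cycle_is_cycleOf hxc hc]⟩

theorem card_quotient_sameCycle (σ : Perm α) :
    Nat.card (Quotient (SameCycle.setoid σ)) = Multiset.card σ.partition.parts := by
  have hker : SameCycle.setoid σ = Setoid.ker σ.cycleKey :=
    Setoid.ext fun _ _ => cycleKey_eq_iff.symm
  rw [hker, Nat.card_congr (Setoid.quotientKerEquivOfSurjective _ σ.cycleKey_surjective),
    Nat.card_sum, parts_partition, Multiset.card_add, Multiset.card_replicate,
    Nat.card_eq_fintype_card, card_fixedPoints, sum_cycleType, cycleType_def, Multiset.card_map,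
    Nat.card_eq_fintype_card, Fintype.card_coe, add_comm]
  rfl

theorem card_parts_partition_le (σ : Perm α) :
    Multiset.card σ.partition.parts ≤ Fintype.card α := by
  rw [← card_quotient_sameCycle, ← Nat.card_eq_fintype_card]
  exact Nat.card_le_card_of_surjective _ Quotient.mk_surjective

end Equiv.Perm

theorem MulAction.sum_natCard_fixedBy (G X : Type*) [Group G] [MulAction G X] [Fintype G]
    [Finite X] :
    ∑ g : G, Nat.card (fixedBy X g) = Nat.card (orbitRel.Quotient G X) * Nat.card G := by
  classical
  have := Fintype.ofFinite X
  simp only [Nat.card_eq_fintype_card]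
  convert sum_card_fixedBy_eq_card_orbits_mul_card_group G X

theorem card_surjective_snd_comp (α β γ : Type*) [Finite α] :
    Nat.card {f : α → β × γ // Surjective (Prod.snd ∘ f)} =
      Nat.card β ^ Nat.card α * Nat.card {g : α → γ // Surjective g} := by
  let e : {f : α → β × γ // Surjective (Prod.snd ∘ f)} ≃
      (α → β) × {g : α → γ // Surjective g} :=
    { toFun f := ⟨Prod.fst ∘ f.1, Prod.snd ∘ f.1, f.2⟩
      invFun x := ⟨fun a => (x.1 a, x.2.1 a), x.2.2⟩
      left_inv _ := rfl
      right_inv _ := rfl }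
  rw [Nat.card_congr e, Nat.card_prod, Nat.card_fun]

theorem card_surjective_congr {α α' : Type*} (e : α ≃ α') (γ : Type*) :
    Nat.card {f : α → γ // Surjective f} = Nat.card {f : α' → γ // Surjective f} :=
  Nat.card_congr <|
    (e.arrowCongr (Equiv.refl γ)).subtypeEquiv fun f => (e.symm.surjective_comp f).symm

def genmatSet (ι κ : Type*) [Fintype ι] [Fintype κ] (n : ℕ) : Set (Matrix ι κ ℕ) :=
  {M | ∑ i, ∑ j, M i j = n ∧ ∀ j, ∃ i, 0 < M i j}

section PermAction

attribute [local instance] arrowAction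

variable {α β γ : Type*}

theorem Equiv.Perm.smul_fun_apply (σ : Perm α) (f : α → β) (a : α) :
    (σ • f) a = f (σ⁻¹ a) :=
  rfl

theorem Equiv.Perm.mem_fixedBy_fun_iff {σ : Perm α} {f : α → β} :
    f ∈ fixedBy (α → β) σ ↔ ∀ a, f (σ a) = f a := by
  rw [← fixedBy_inv, mem_fixedBy, funext_iff]
  simp [Perm.smul_fun_apply]

def Equiv.Perm.fixedByFunEquiv (σ : Perm α) :
    fixedBy (α → β) σ ≃ (Quotient (SameCycle.setoid σ) → β) where
  toFun f := Quotient.lift f.1 fun a b ⟨i, hi⟩ => by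
    have := congrFun (fixedBy_subset_fixedBy_zpow (α → β) σ i f.2) b
    subst hi
    simpa [Perm.smul_fun_apply] using this
  invFun h := ⟨fun a => h ⟦a⟧, Perm.mem_fixedBy_fun_iff.2 fun a =>
    congrArg h (Quotient.sound ⟨-1, by simp⟩)⟩
  left_inv _ := rfl
  right_inv h := funext (Quotient.ind fun _ => rfl)

variable (α) in
def surjCompSubMulAction (p : β → γ) : SubMulAction (Perm α) (α → β) where
  carrier := {f | Surjective (p ∘ f)}
  smul_mem' σ _ hf := hf.comp σ⁻¹.surjective

def Equiv.Perm.fixedBySurjCompEquiv (p : β → γ) (σ : Perm α) :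
    fixedBy (surjCompSubMulAction α p) σ ≃
      {h : Quotient (SameCycle.setoid σ) → β // Surjective (p ∘ h)} where
  toFun f := ⟨σ.fixedByFunEquiv ⟨f.1.1, congrArg Subtype.val f.2⟩,
    (Surjective.of_comp_iff _ Quotient.mk_surjective).1 f.1.2⟩
  invFun h := ⟨⟨(σ.fixedByFunEquiv.symm h.1 : α → β),
    (Surjective.of_comp_iff _ Quotient.mk_surjective).2 h.2⟩,
    Subtype.ext (σ.fixedByFunEquiv.symm h.1).2⟩
  left_inv _ := rfl
  right_inv h := Subtype.ext (σ.fixedByFunEquiv.right_inv h.1)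

theorem mem_orbit_perm_fun_iff [Fintype α] [DecidableEq β] {f g : α → β} :
    g ∈ orbit (Perm α) f ↔ ∀ b, #{a | g a = b} = #{a | f a = b} := by
  constructor
  · rintro ⟨σ, rfl⟩ b
    exact card_fiber_comp_perm f σ⁻¹ b
  · intro h
    obtain ⟨σ, hσ⟩ := exists_perm_comp_eq_of_card_fiber_eq h
    exact ⟨σ⁻¹, by simpa [funext_iff, Perm.smul_fun_apply] using congrFun hσ⟩

variable {ι κ : Type*} [DecidableEq ι] [DecidableEq κ]

def fiberCardMatrix [Fintype α] (f : α → ι × κ) : Matrix ι κ ℕ :=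
  Matrix.of fun i j => #{a | f a = (i, j)}

theorem fiberCardMatrix_eq_iff [Fintype α] {f g : α → ι × κ} :
    fiberCardMatrix f = fiberCardMatrix g ↔ ∀ b, #{a | f a = b} = #{a | g a = b} := by
  simp only [fiberCardMatrix, EmbeddingLike.apply_eq_iff_eq, funext_iff, Prod.forall]

theorem sum_fiberCardMatrix [Fintype α] [Fintype ι] [Fintype κ] (f : α → ι × κ) :
    ∑ i, ∑ j, fiberCardMatrix f i j = Fintype.card α := by
  simp only [fiberCardMatrix, Matrix.of_apply]
  rw [← Fintype.sum_prod_type' (f := fun i j => #{a | f a = (i, j)}), ← card_univ,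
    card_eq_sum_card_fiberwise (f := f) (t := univ) (by simp)]

theorem orbitRel_surjComp_snd [Fintype α] :
    orbitRel (Perm α) (surjCompSubMulAction α (Prod.snd : ι × κ → κ)) =
      Setoid.ker fun f => fiberCardMatrix f.1 := by
  ext f g
  rw [orbitRel_apply, SubMulAction.mem_orbit_subMul_iff, mem_orbit_perm_fun_iff, Setoid.ker_def,
    fiberCardMatrix_eq_iff]

theorem range_fiberCardMatrix [Fintype α] [Fintype ι] [Fintype κ] :
    Set.range (fun f : surjCompSubMulAction α (Prod.snd : ι × κ → κ) =>
      fiberCardMatrix f.1) =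
      genmatSet ι κ (Fintype.card α) := by
  ext M
  constructor
  · rintro ⟨⟨f, hf⟩, rfl⟩
    refine ⟨sum_fiberCardMatrix f, fun j => ?_⟩
    obtain ⟨a, ha⟩ := hf j
    exact ⟨(f a).1, card_pos.2 ⟨a, by simp [← ha]⟩⟩
  · rintro ⟨hsum, hcol⟩
    obtain ⟨f, hf⟩ := exists_card_fiber_eq (α := α) (fun b : ι × κ => M b.1 b.2)
      (by rw [Fintype.sum_prod_type]; exact hsum)
    refine ⟨⟨f, fun j => ?_⟩, Matrix.ext fun i j => hf (i, j)⟩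
    obtain ⟨i, hi⟩ := hcol j
    obtain ⟨a, ha⟩ := card_pos.1 ((hf (i, j)).symm ▸ hi)
    exact ⟨a, by simp_all⟩

theorem card_orbitRel_quotient_surjComp_snd [Fintype α] [Fintype ι] [Fintype κ] :
    Nat.card (orbitRel.Quotient (Perm α) (surjCompSubMulAction α (Prod.snd : ι × κ → κ))) =
      Nat.card (genmatSet ι κ (Fintype.card α)) := by
  rw [orbitRel.Quotient, orbitRel_surjComp_snd, Nat.card_congr (Setoid.quotientKerEquivRange _),
    range_fiberCardMatrix]

theorem factorial_mul_card_matrix_eq_sum (α ι κ : Type*) [Fintype α] [DecidableEq α]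
    [Fintype ι] [DecidableEq ι] [Fintype κ] [DecidableEq κ] :
    (Fintype.card α)! * Nat.card (genmatSet ι κ (Fintype.card α)) =
      ∑ σ : Perm α, Fintype.card ι ^ Multiset.card σ.partition.parts *
        Nat.card {f : Fin (Multiset.card σ.partition.parts) → κ // Surjective f} := by
  rw [← card_orbitRel_quotient_surjComp_snd, mul_comm, ← Fintype.card_perm,
    ← Nat.card_eq_fintype_card (α := Perm α), ← MulAction.sum_natCard_fixedBy]
  refine sum_congr rfl fun σ _ => ?_
  rw [Nat.card_congr (σ.fixedBySurjCompEquiv _), card_surjective_snd_comp,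
    card_surjective_congr (Finite.equivFin _), σ.card_quotient_sameCycle, Nat.card_eq_fintype_card]

end PermAction

theorem Nat.card_sigma_eq_sum_range {β : ℕ → Type*} [∀ k, Finite (β k)] {N : ℕ}
    (h : ∀ k, N < k → IsEmpty (β k)) :
    Nat.card (Σ k, β k) = ∑ k ∈ range (N + 1), Nat.card (β k) := by
  have hmem : ∀ x : Σ k, β k, x.1 ∈ range (N + 1) := fun ⟨k, b⟩ =>
    mem_range_succ_iff.2 (not_lt.1 fun hk => (h k hk).false b)
  rw [← Nat.card_congr (subtypeUnivEquiv hmem), Nat.card_congr (subtypeSigmaEquiv β _),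
    Nat.card_sigma]
  exact sum_coe_sort (range (N + 1)) fun k => Nat.card (β k)

def Equiv.subtypeSigmaEquivSigmaSubtype {α : Type*} {β : α → Type*}
    (p : ∀ a, β a → Prop) :
    {x : Σ a, β a // p x.1 x.2} ≃ Σ a, {b : β a // p a b} where
  toFun x := ⟨x.1.1, x.1.2, x.2⟩
  invFun x := ⟨⟨x.1, x.2.1⟩, x.2.2⟩
  left_inv _ := rfl
  right_inv _ := rfl

theorem List.Pairwise.eq_of_mem_getElem_of_disjoint {α : Type*} {L : List (Finset α)}
    (hL : L.Pairwise _root_.Disjoint) {i j : Fin L.length} {x : α} (hi : x ∈ L[i])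
    (hj : x ∈ L[j]) : i = j := by
  by_contra hij
  rcases lt_or_gt_of_ne hij with h | h
  · exact Finset.disjoint_left.1 (List.pairwise_iff_getElem.1 hL i j i.2 j.2 h) hi hj
  · exact Finset.disjoint_left.1 (List.pairwise_iff_getElem.1 hL j i j.2 i.2 h) hj hi

section OrderedPartition

variable {α : Type*} [Fintype α]

def fiberList {k : ℕ} (f : α → Fin k) : List (Finset α) :=
  List.ofFn fun j => ({x | f x = j} : Finset α)

theorem fiberList_injective :
    Injective fun f : Σ k, {f : α → Fin k // Surjective f} => fiberList f.2.1 := by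
  rintro ⟨k, f, hf⟩ ⟨l, g, hg⟩ h
  obtain ⟨rfl, hfib⟩ := Sigma.mk.inj_iff.1 (List.ofFn_inj'.1 h)
  have hfg : f = g := funext fun x =>
    (show g x = f x by simpa using (Finset.ext_iff.1 (congrFun (eq_of_heq hfib) (f x)) x).1).symm
  subst hfg
  rfl

theorem range_fiberList :
    Set.range (fun f : Σ k, {f : α → Fin k // Surjective f} => fiberList f.2.1) =
      {L | (∀ B ∈ L, B.Nonempty) ∧ L.Pairwise Disjoint ∧ ∀ x, ∃ B ∈ L, x ∈ B} := by
  ext L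
  constructor
  · rintro ⟨⟨k, f, hf⟩, rfl⟩
    refine ⟨?_, List.pairwise_ofFn.2 fun i j hij => ?_,
      fun x => ⟨_, List.mem_ofFn.2 ⟨f x, rfl⟩, by simp⟩⟩
    · rintro B hB
      obtain ⟨j, rfl⟩ := List.mem_ofFn.1 hB
      obtain ⟨x, hx⟩ := hf j
      exact ⟨x, by simpa using hx⟩
    · exact disjoint_filter.2 fun x _ hi hj => hij.ne (hi.symm.trans hj)
  · rintro ⟨hne, hdisj, hcov⟩
    have hidx : ∀ x, ∃ j : Fin L.length, x ∈ L[j] := fun x => by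
      obtain ⟨B, hB, hx⟩ := hcov x
      obtain ⟨j, hj, rfl⟩ := List.mem_iff_getElem.1 hB
      exact ⟨⟨j, hj⟩, hx⟩
    choose f hf using hidx
    have hfib : ∀ j x, x ∈ L[j] ↔ f x = j := fun j x =>
      ⟨fun hx => hdisj.eq_of_mem_getElem_of_disjoint (hf x) hx, by rintro rfl; exact hf x⟩
    refine ⟨⟨L.length, f, fun j => ?_⟩, ?_⟩
    · obtain ⟨x, hx⟩ := hne _ (List.getElem_mem j.2)
      exact ⟨x, (hfib j x).1 hx⟩
    · conv_rhs => rw [← List.ofFn_getElem (xs := L)]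
      exact congrArg List.ofFn (funext fun j => Finset.ext fun x => by simpa using (hfib j x).symm)

end OrderedPartition

theorem fubini_eq_sum_card_surjective {c N : ℕ} (hc : c ≤ N) :
    fubini c = ∑ k ∈ range (N + 1), Nat.card {f : Fin c → Fin k // Surjective f} := by
  rw [fubini, ← range_fiberList, ← Nat.card_coe_set_eq,
    Nat.card_range_of_injective fiberList_injective, Nat.card_sigma_eq_sum_range]
  intro k hk
  refine ⟨fun f => ?_⟩
  have := Fintype.card_le_of_surjective _ f.2
  simp only [Fintype.card_fin] at this
  omega

theorem Matrix.card_le_sum_of_forall_exists_pos {ι κ : Type*} [Fintype ι] [Fintype κ]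
    {M : Matrix ι κ ℕ} (h : ∀ j, ∃ i, 0 < M i j) :
    Fintype.card κ ≤ ∑ i, ∑ j, M i j := by
  calc Fintype.card κ = ∑ _j : κ, 1 := Fintype.card_eq_sum_ones
    _ ≤ ∑ j, ∑ i, M i j := sum_le_sum fun j _ => by
      obtain ⟨i, hi⟩ := h j
      exact hi.trans_le <|
        single_le_sum (f := fun i => M i j) (fun _ _ => Nat.zero_le _) (mem_univ i)
    _ = ∑ i, ∑ j, M i j := sum_comm

theorem Matrix.finite_sum_eq (ι κ : Type*) [Fintype ι] [Fintype κ] (n : ℕ) :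
    Set.Finite {M : Matrix ι κ ℕ | ∑ i, ∑ j, M i j = n} := by
  classical
  refine (Set.finite_Iic (fun _ _ => n : ι → κ → ℕ)).subset fun M hM i j => ?_
  calc M i j ≤ ∑ j, M i j := single_le_sum (fun _ _ => Nat.zero_le _) (mem_univ j)
    _ ≤ ∑ i, ∑ j, M i j :=
      single_le_sum (f := fun i => ∑ j, M i j) (fun _ _ => Nat.zero_le _) (mem_univ i)
    _ = n := hM

theorem genmatCard_eq_sum (m n : ℕ) :
    GenmatCard m n = ∑ k ∈ range (n + 1), Nat.card (genmatSet (Fin m) (Fin k) n) := by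
  have (k : ℕ) : Finite (genmatSet (Fin m) (Fin k) n) :=
    ((Matrix.finite_sum_eq _ _ n).subset fun _ hM => hM.1).to_subtype
  rw [GenmatCard, ← Nat.card_coe_set_eq]
  refine (Nat.card_congr (subtypeSigmaEquivSigmaSubtype fun k M =>
    M ∈ genmatSet (Fin m) (Fin k) n)).trans
      (Nat.card_sigma_eq_sum_range fun k hk => ⟨fun M => ?_⟩)
  have := Matrix.card_le_sum_of_forall_exists_pos M.2.2
  rw [M.2.1, Fintype.card_fin] at this
  omega

theorem stirling1_eq_card (n k : ℕ) :
    stirling1 n k = #{σ : Perm (Fin n) | Multiset.card σ.partition.parts = k} := by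
  rw [stirling1, ← Set.ncard_coe_finset]
  congr 1
  ext σ
  simp [Perm.parts_partition, add_comm]

theorem sum_perm_eq_sum_stirling1 (n : ℕ) (F : ℕ → ℕ) :
    ∑ σ : Perm (Fin n), F (Multiset.card σ.partition.parts) =
      ∑ k ∈ range (n + 1), stirling1 n k * F k := by
  rw [← sum_fiberwise_of_maps_to (t := range (n + 1)) fun σ _ =>
    mem_range_succ_iff.2 (by simpa using σ.card_parts_partition_le)]
  refine sum_congr rfl fun k _ => ?_
  rw [stirling1_eq_card, ← smul_eq_mul, ← sum_const]
  exact sum_congr rfl fun σ hσ => by rw [(mem_filter.1 hσ).2]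

theorem genmat_card_stirling (m n : ℕ) :
    Nat.factorial n * GenmatCard m n =
      ∑ k ∈ Finset.range (n + 1), stirling1 n k * m ^ k * fubini k := by
  set c : Perm (Fin n) → ℕ := fun σ => Multiset.card σ.partition.parts
  have burnside (k : ℕ) :
      n ! * Nat.card (genmatSet (Fin m) (Fin k) n) =
        ∑ σ, m ^ c σ * Nat.card {f : Fin (c σ) → Fin k // Surjective f} := by
    simpa using factorial_mul_card_matrix_eq_sum (Fin n) (Fin m) (Fin k)
  calc n ! * GenmatCard m n
      = ∑ k ∈ range (n + 1), ∑ σ,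
          m ^ c σ * Nat.card {f : Fin (c σ) → Fin k // Surjective f} := by
        rw [genmatCard_eq_sum, mul_sum]
        exact sum_congr rfl fun k _ => burnside k
    _ = ∑ σ, m ^ c σ * fubini (c σ) := by
        rw [sum_comm]
        refine sum_congr rfl fun σ _ => ?_
        rw [← mul_sum, fubini_eq_sum_card_surjective (by simpa using σ.card_parts_partition_le)]
    _ = ∑ k ∈ range (n + 1), stirling1 n k * m ^ k * fubini k := by
        simp only [sum_perm_eq_sum_stirling1 n fun k => m ^ k * fubini k, mul_assoc, c]
end

section
/- For all n ≥ 0: n! · |Mat[n]| = Σ_{k=0}^{n} fub(k)^2 · c(n,k), where Mat[n] is the set of Burge matrices of size n, c(n,k) is the unsigned Stirling number of the first kind, and fub is the Fubini number. -/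
open Finset

noncomputable def MatCard (n : ℕ) : ℕ :=
  Set.ncard {p : Σ r : ℕ, Σ k : ℕ, Matrix (Fin r) (Fin k) ℕ |
    (∑ i, ∑ j, p.2.2 i j) = n ∧ (∀ i, ∃ j, 0 < p.2.2 i j) ∧ ∀ j, ∃ i, 0 < p.2.2 i j}

/-!
Both sides count the triples `(σ, P, Q)` where `σ` is a permutation of `[n]` and `P`, `Q` are
ordered set partitions of `[n]` whose blocks are unions of cycles of `σ`.

Grouped by `σ`: such a `P` is an ordered set partition of the set of cycles of `σ`, so a
permutation with `k` cycles contributes `fub(k)²`.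

Grouped by the Burge matrix `M a b = |P a ∩ Q b|`: the pair `(P, Q)` is a map
`F : [n] → [r] × [c]` with fibre sizes `M`; these maps form a single orbit of `S_n`, and `σ` ranges
over the stabilizer of `F`. Summed over an orbit, the stabilizers have `n!` elements in total.
-/

open Function Equiv

theorem List.findIdx_mem_eq_of_pairwise_disjoint {α : Type*} [DecidableEq α]
    {L : List (Finset α)} (hL : L.Pairwise _root_.Disjoint) {i : ℕ} (hi : i < L.length) {x : α}
    (hx : x ∈ L[i]) : L.findIdx (fun B => x ∈ B) = i := by
  refine (List.findIdx_eq hi).mpr ⟨by simpa using hx, fun j hj => ?_⟩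
  have := List.pairwise_iff_getElem.mp hL j i (hj.trans hi) hi hj
  simpa using Finset.disjoint_right.mp this hx

/-- An ordered set partition of `α` into `r` blocks, encoded by the surjection `α → Fin r`
sending each element to the index of its block. -/
abbrev OrderedPartition (α : Type*) : Type _ := Σ r : ℕ, {f : α → Fin r // Surjective f}

namespace OrderedPartition

variable {α β : Type*}

def congr (e : α ≃ β) : OrderedPartition α ≃ OrderedPartition β :=
  Equiv.sigmaCongrRight fun _ =>
    (e.arrowCongr (Equiv.refl _)).subtypeEquiv fun f => (e.symm.surjective_comp f).symm

theorem fst_le_card [Finite α] (p : OrderedPartition α) : p.1 ≤ Nat.card α := by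
  simpa using Nat.card_le_card_of_surjective _ p.2.2

instance [Finite α] : Finite (OrderedPartition α) := by
  refine Finite.of_injective (β := Fin (Nat.card α + 1) × (α → Fin (Nat.card α + 1)))
    (fun p => (⟨p.1, Nat.lt_succ_of_le p.fst_le_card⟩,
      fun x => ⟨p.2.1 x, Nat.lt_succ_of_lt ((p.2.1 x).2.trans_le p.fst_le_card)⟩)) ?_
  rintro ⟨r, f, hf⟩ ⟨s, g, hg⟩ h
  simp only [Prod.mk.injEq, Fin.mk.injEq, funext_iff] at h
  obtain ⟨rfl, h⟩ := h
  simp only [Sigma.mk.injEq, heq_eq_eq, true_and, Subtype.mk.injEq]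
  exact funext fun x => Fin.ext (h x)

def quotientEquiv (s : Setoid α) :
    {p : OrderedPartition α // ∀ x y, s x y → p.2.1 x = p.2.1 y} ≃
      OrderedPartition (Quotient s) where
  toFun p := ⟨p.1.1, Quotient.lift p.1.2.1 p.2, Surjective.of_comp (g := Quotient.mk s) p.1.2.2⟩
  invFun q := ⟨⟨q.1, q.2.1 ∘ Quotient.mk s, q.2.2.comp Quotient.mk_surjective⟩,
    fun _ _ h => congrArg q.2.1 (Quotient.sound h)⟩
  left_inv _ := rfl
  right_inv := by
    rintro ⟨r, g, hg⟩
    simp only [Sigma.mk.injEq, heq_eq_eq, true_and, Subtype.mk.injEq]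
    funext q
    induction q using Quotient.ind
    rfl

section Blocks

variable [Fintype α]

def blocks (p : OrderedPartition α) : List (Finset α) :=
  List.ofFn fun i => ({x | p.2.1 x = i} : Finset α)

theorem blocks_injective : Injective (blocks (α := α)) := by
  rintro ⟨r, f, hf⟩ ⟨s, g, hg⟩ h
  obtain ⟨rfl, h⟩ := Sigma.mk.inj_iff.mp (List.ofFn_inj'.mp h)
  have h := congrFun (eq_of_heq h)
  simp only [Sigma.mk.injEq, heq_eq_eq, true_and, Subtype.mk.injEq]
  funext x
  have hx : x ∈ ({y | g y = f x} : Finset α) := (Finset.ext_iff.mp (h (f x)) x).mp (by simp)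
  exact (Finset.mem_filter.mp hx).2.symm

theorem range_blocks [DecidableEq α] : Set.range (blocks (α := α)) =
    {L | (∀ B ∈ L, B.Nonempty) ∧ L.Pairwise Disjoint ∧ ∀ x, ∃ B ∈ L, x ∈ B} := by
  ext L
  constructor
  · rintro ⟨⟨r, f, hf⟩, rfl⟩
    refine ⟨?_, ?_, fun x => ⟨_, List.mem_ofFn.mpr ⟨f x, rfl⟩, by simp⟩⟩
    · simp only [blocks, List.mem_ofFn]
      rintro _ ⟨i, rfl⟩
      obtain ⟨x, rfl⟩ := hf i
      exact ⟨x, by simp⟩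
    · refine List.pairwise_ofFn.mpr fun i j hij => Finset.disjoint_left.mpr ?_
      simp only [Finset.mem_filter, Finset.mem_univ, true_and]
      rintro x rfl rfl
      exact hij.ne rfl
  · rintro ⟨hne, hdisj, hcov⟩
    have hlt : ∀ x, L.findIdx (fun B => x ∈ B) < L.length := fun x =>
      List.findIdx_lt_length_of_exists (by simpa using hcov x)
    have hmem : ∀ x, x ∈ L[L.findIdx (fun B => x ∈ B)]'(hlt x) := fun x => by
      simpa using List.findIdx_getElem (w := hlt x)
    refine ⟨⟨L.length, fun x => ⟨_, hlt x⟩, fun i => ?_⟩, ?_⟩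
    · obtain ⟨x, hx⟩ := hne _ (List.getElem_mem i.2)
      exact ⟨x, Fin.ext (List.findIdx_mem_eq_of_pairwise_disjoint hdisj i.2 hx)⟩
    · refine List.ext_getElem (by simp [blocks]) fun i hi hi' => ?_
      ext x
      simp only [blocks, List.getElem_ofFn, Finset.mem_filter, Finset.mem_univ, true_and,
        Fin.mk.injEq]
      constructor
      · rintro rfl
        exact hmem x
      · exact List.findIdx_mem_eq_of_pairwise_disjoint hdisj hi'

end Blocks

theorem card_eq_fubini [Finite α] : Nat.card (OrderedPartition α) = fubini (Nat.card α) := by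
  rw [Nat.card_congr (congr (Finite.equivFin α)), fubini, ← range_blocks,
    Set.ncard_range_of_injective blocks_injective]

end OrderedPartition

namespace Equiv.Perm

variable {α β : Type*}

noncomputable def numCycles (σ : Perm α) : ℕ := Nat.card (Quotient (SameCycle.setoid σ))

theorem numCycles_le [Finite α] (σ : Perm α) : σ.numCycles ≤ Nat.card α :=
  Nat.card_le_card_of_surjective _ Quotient.mk_surjective

theorem numCycles_eq [Fintype α] [DecidableEq α] (σ : Perm α) :
    σ.numCycles = Fintype.card α - #σ.support + Multiset.card σ.cycleType := by
  let toSum : α → fixedPoints σ ⊕ σ.cycleFactorsFinset := fun x =>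
    if hx : σ x = x then .inl ⟨x, hx⟩
    else .inr ⟨σ.cycleOf x, cycleOf_mem_cycleFactorsFinset_iff.mpr (mem_support.mpr hx)⟩
  have hcompat : ∀ x y, σ.SameCycle x y → toSum x = toSum y := by
    intro x y hxy
    by_cases hx : σ x = x
    · obtain rfl := hxy.eq_of_left hx
      rfl
    · have hy : σ y ≠ y := mem_support.mp (hxy.mem_support_iff.mp (mem_support.mpr hx))
      simp only [toSum, dif_neg hx, dif_neg hy, hxy.cycleOf_eq]
  have hbij : Bijective (Quotient.lift (s := SameCycle.setoid σ) toSum hcompat) := by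
    refine ⟨fun q q' => ?_, ?_⟩
    · induction q, q' using Quotient.inductionOn₂ with | _ x y => ?_
      intro h
      apply Quotient.sound
      by_cases hx : σ x = x <;> by_cases hy : σ y = y <;>
        simp only [Quotient.lift_mk, toSum, hx, hy, dif_pos, dif_neg, not_false_eq_true,
          reduceCtorEq, Sum.inl.injEq, Sum.inr.injEq, Subtype.mk.injEq] at h
      · obtain rfl : x = y := congrArg Subtype.val h
        exact .refl _ _
      · exact (sameCycle_iff_cycleOf_eq_of_mem_support (mem_support.mpr hx)
          (mem_support.mpr hy)).mpr h
    · rintro (⟨x, hx⟩ | ⟨c, hc⟩)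
      · exact ⟨⟦x⟧, by simp only [Quotient.lift_mk, toSum, dif_pos (mem_fixedPoints_iff.mp hx)]⟩
      · obtain ⟨a, ha⟩ := (mem_cycleFactorsFinset_iff.mp hc).1.nonempty_support
        have hσa := mem_support.mp (mem_cycleFactorsFinset_support_le hc ha)
        refine ⟨⟦a⟧, ?_⟩
        simp only [Quotient.lift_mk, toSum, dif_neg hσa, cycle_is_cycleOf ha hc]
  rw [numCycles, Nat.card_congr (Equiv.ofBijective _ hbij), Nat.card_sum, Nat.card_eq_fintype_card,
    card_fixedPoints, sum_cycleType, Nat.card_eq_fintype_card, Fintype.card_coe, cycleType_def,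
    Multiset.card_map, Finset.card_val]

theorem comp_eq_self_iff_sameCycle [Finite α] {σ : Perm α} {f : α → β} :
    f ∘ σ = f ↔ ∀ x y, σ.SameCycle x y → f x = f y := by
  refine ⟨fun h x y hxy => ?_,
    fun h => funext fun x => h _ _ (sameCycle_apply_left.mpr (.refl _ _))⟩
  obtain ⟨i, rfl⟩ := hxy.exists_nat_pow_eq
  rw [coe_pow]
  exact (congrFun (iterate_invariant h i) x).symm

end Equiv.Perm

section FiberCard

variable {α ι : Type*}

theorem Nat.card_eq_sum_card_fiber [Finite α] [Fintype ι] (F : α → ι) :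
    Nat.card α = ∑ i, Nat.card {x // F x = i} := by
  rw [← Nat.card_sigma, Nat.card_congr (Equiv.sigmaFiberEquiv F)]

theorem exists_card_fiber_eq_s6 [Finite α] [Fintype ι] (m : ι → ℕ) (hm : ∑ i, m i = Nat.card α) :
    ∃ F : α → ι, ∀ i, Nat.card {x // F x = i} = m i := by
  obtain ⟨e⟩ : Nonempty (α ≃ Σ i, Fin (m i)) := Finite.card_eq.mp (by simp [hm])
  refine ⟨fun x => (e x).1, fun i => ?_⟩
  rw [Nat.card_congr ((e.subtypeEquiv fun _ => Iff.rfl).trans (Equiv.sigmaSubtype i)),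
    Nat.card_eq_fintype_card, Fintype.card_fin]

theorem exists_perm_comp_eq_iff [Finite α] {F F₀ : α → ι} :
    (∃ τ : Perm α, F = F₀ ∘ τ) ↔ ∀ i, Nat.card {x // F x = i} = Nat.card {x // F₀ x = i} := by
  constructor
  · rintro ⟨τ, rfl⟩ i
    exact Nat.card_congr (τ.subtypeEquiv fun _ => Iff.rfl)
  · intro h
    let e := fun i => (Finite.card_eq.mp (h i)).some
    exact ⟨Equiv.ofFiberEquiv e, funext fun x => (Equiv.ofFiberEquiv_map e x).symm⟩

theorem card_stabilizing_pairs_orbit (F₀ : α → ι) :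
    Nat.card {p : Perm α × (α → ι) // (∃ τ : Perm α, p.2 = F₀ ∘ τ) ∧ p.2 ∘ p.1 = p.2} =
      Nat.card (Perm α) := by
  choose! τ hτ using fun (F : α → ι) (h : ∃ τ : Perm α, F = F₀ ∘ τ) => h
  refine Nat.card_congr
    { toFun := fun p => τ p.1.2 * p.1.1
      invFun := fun π => ⟨((τ (F₀ ∘ π))⁻¹ * π, F₀ ∘ π), ⟨π, rfl⟩, ?_⟩
      left_inv := ?_
      right_inv := fun π => mul_inv_cancel_left _ π }
  · calc (F₀ ∘ π) ∘ ⇑((τ (F₀ ∘ π))⁻¹ * π) = (F₀ ∘ τ (F₀ ∘ π)) ∘ ⇑((τ (F₀ ∘ π))⁻¹ * π) := by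
          rw [← hτ _ ⟨π, rfl⟩]
      _ = F₀ ∘ π := by ext; simp
  · rintro ⟨⟨σ, F⟩, hF, hσ⟩
    dsimp only at hF hσ
    have hF' : F₀ ∘ (τ F * σ) = F :=
      calc F₀ ∘ (τ F * σ) = (F₀ ∘ τ F) ∘ σ := rfl
        _ = F := by rw [← hτ F hF, hσ]
    simp only [hF', inv_mul_cancel_left]

abbrev StabilizingPairs (α ι : Type*) (m : ι → ℕ) : Type _ :=
  {p : Perm α × (α → ι) // (∀ i, Nat.card {x // p.2 x = i} = m i) ∧ p.2 ∘ p.1 = p.2}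

theorem card_stabilizingPairs [Finite α] [Fintype ι] (m : ι → ℕ) (hm : ∑ i, m i = Nat.card α) :
    Nat.card (StabilizingPairs α ι m) = (Nat.card α).factorial := by
  obtain ⟨F₀, hF₀⟩ := exists_card_fiber_eq_s6 m hm
  rw [← Nat.card_perm, ← card_stabilizing_pairs_orbit F₀]
  exact Nat.card_congr
    (Equiv.subtypeEquivRight fun _ => by simp only [exists_perm_comp_eq_iff, hF₀])

end FiberCard

def burgeMatrices (n : ℕ) : Set (Σ r : ℕ, Σ k : ℕ, Matrix (Fin r) (Fin k) ℕ) :=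
  {p | (∑ i, ∑ j, p.2.2 i j) = n ∧ (∀ i, ∃ j, 0 < p.2.2 i j) ∧ ∀ j, ∃ i, 0 < p.2.2 i j}

theorem mk_mem_burgeMatrices_iff {α : Type*} [Finite α] {r c : ℕ} {F : α → Fin r × Fin c}
    {M : Matrix (Fin r) (Fin c) ℕ} (hM : ∀ i, Nat.card {x // F x = i} = M i.1 i.2) :
    ⟨r, c, M⟩ ∈ burgeMatrices (Nat.card α) ↔
      Surjective (Prod.fst ∘ F) ∧ Surjective (Prod.snd ∘ F) := by
  have hsum : ∑ i, ∑ j, M i j = Nat.card α := by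
    rw [Nat.card_eq_sum_card_fiber F, Fintype.sum_prod_type]
    simp only [hM]
  have hpos : ∀ a b, 0 < M a b ↔ ∃ x, F x = (a, b) := fun a b => by
    rw [← hM (a, b), Nat.card_pos_iff, nonempty_subtype, and_iff_left Subtype.finite]
  simp only [burgeMatrices, Set.mem_ofPred_eq, hsum, true_and, Surjective, comp_apply, hpos,
    Prod.ext_iff]
  exact and_congr
    (forall_congr' fun _ => ⟨fun ⟨_, x, hx, _⟩ => ⟨x, hx⟩, fun ⟨x, hx⟩ => ⟨_, x, hx, rfl⟩⟩)
    (forall_congr' fun _ => ⟨fun ⟨_, x, _, hx⟩ => ⟨x, hx⟩, fun ⟨x, hx⟩ => ⟨_, x, rfl, hx⟩⟩)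

abbrev InvariantOrderedPartition {α : Type*} (σ : Perm α) : Type _ :=
  {p : OrderedPartition α // p.2.1 ∘ σ = p.2.1}

theorem card_invariantOrderedPartition {α : Type*} [Finite α] (σ : Perm α) :
    Nat.card (InvariantOrderedPartition σ) = fubini σ.numCycles := by
  rw [Perm.numCycles, ← OrderedPartition.card_eq_fubini,
    ← Nat.card_congr (OrderedPartition.quotientEquiv _)]
  exact Nat.card_congr (Equiv.subtypeEquivRight fun _ => Perm.comp_eq_self_iff_sameCycle)

abbrev CompatibleTriple (α : Type*) : Type _ :=
  Σ σ : Perm α, InvariantOrderedPartition σ × InvariantOrderedPartition σ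

namespace CompatibleTriple

variable {α : Type*}

noncomputable def equivSigmaBurgeMatrices [Finite α] :
    CompatibleTriple α ≃ Σ m : burgeMatrices (Nat.card α),
      StabilizingPairs α (Fin m.1.1 × Fin m.1.2.1) fun i => m.1.2.2 i.1 i.2 where
  toFun := fun ⟨σ, ⟨⟨r, f, hf⟩, hfσ⟩, ⟨⟨c, g, hg⟩, hgσ⟩⟩ =>
    ⟨⟨⟨r, c, fun a b => Nat.card {x // (f x, g x) = (a, b)}⟩,
        (mk_mem_burgeMatrices_iff (F := fun x => (f x, g x)) fun _ => rfl).mpr ⟨hf, hg⟩⟩,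
      ⟨(σ, fun x => (f x, g x)), fun _ => rfl,
        funext fun x => Prod.ext (congrFun hfσ x) (congrFun hgσ x)⟩⟩
  invFun := fun ⟨⟨⟨r, c, M⟩, hM⟩, ⟨⟨σ, F⟩, hFM, hσ⟩⟩ =>
    have hsurj := (mk_mem_burgeMatrices_iff hFM).mp hM
    ⟨σ, ⟨⟨r, Prod.fst ∘ F, hsurj.1⟩, by rw [comp_assoc, hσ]⟩,
      ⟨⟨c, Prod.snd ∘ F, hsurj.2⟩, by rw [comp_assoc, hσ]⟩⟩
  left_inv := fun ⟨σ, ⟨⟨r, f, hf⟩, hfσ⟩, ⟨⟨c, g, hg⟩, hgσ⟩⟩ => rfl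
  right_inv := by
    rintro ⟨⟨⟨r, c, M⟩, hM⟩, p⟩
    -- so that the type of `F` mentions `r` and `c` but not `M`, which can then be substituted
    dsimp only at p
    obtain ⟨⟨σ, F⟩, hFM, hσ⟩ := p
    obtain rfl : M = fun a b => Nat.card {x // F x = (a, b)} :=
      funext₂ fun a b => (hFM (a, b)).symm
    rfl

theorem card_eq_ncard_burgeMatrices_mul [Finite α] :
    Nat.card (CompatibleTriple α) =
      (burgeMatrices (Nat.card α)).ncard * (Nat.card α).factorial := by
  have hfiber : ∀ m : burgeMatrices (Nat.card α),
      Nonempty (StabilizingPairs α (Fin m.1.1 × Fin m.1.2.1) (fun i => m.1.2.2 i.1 i.2) ≃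
        Perm α) := by
    rintro ⟨⟨r, c, M⟩, hM⟩
    refine Finite.card_eq.mp ?_
    rw [card_stabilizingPairs _ ?_, Nat.card_perm]
    simpa [Fintype.sum_prod_type] using hM.1
  rw [Nat.card_congr (equivSigmaBurgeMatrices.trans
      ((Equiv.sigmaCongrRight fun m => (hfiber m).some).trans (Equiv.sigmaEquivProd _ _))),
    Nat.card_prod, Nat.card_perm, Nat.card_coe_set_eq]

theorem card_eq_sum_fubini_sq [Fintype α] [DecidableEq α] :
    Nat.card (CompatibleTriple α) = ∑ σ : Perm α, fubini σ.numCycles ^ 2 := by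
  simp only [Nat.card_sigma, Nat.card_prod, card_invariantOrderedPartition, sq]

end CompatibleTriple

theorem stirling1_eq_card_filter (n k : ℕ) :
    stirling1 n k = #{σ : Perm (Fin n) | σ.numCycles = k} := by
  rw [← Set.ncard_coe_finset, stirling1]
  simp [Perm.numCycles_eq]

theorem sum_fubini_sq_numCycles (n : ℕ) :
    ∑ σ : Perm (Fin n), fubini σ.numCycles ^ 2 =
      ∑ k ∈ range (n + 1), fubini k ^ 2 * stirling1 n k := by
  rw [← sum_fiberwise_of_maps_to (t := range (n + 1)) (g := Perm.numCycles) fun σ _ => by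
    simpa [Nat.lt_succ_iff] using σ.numCycles_le]
  refine sum_congr rfl fun k _ => ?_
  rw [sum_congr rfl fun σ hσ => by rw [(mem_filter.mp hσ).2], sum_const, smul_eq_mul,
    stirling1_eq_card_filter, mul_comm]

theorem burge_mat_card (n : ℕ) :
    Nat.factorial n * MatCard n =
      ∑ k ∈ Finset.range (n + 1), fubini k ^ 2 * stirling1 n k := by
  calc n.factorial * MatCard n = Nat.card (CompatibleTriple (Fin n)) := by
        rw [CompatibleTriple.card_eq_ncard_burgeMatrices_mul, Nat.card_fin, mul_comm]
        rfl
    _ = ∑ σ : Perm (Fin n), fubini σ.numCycles ^ 2 := CompatibleTriple.card_eq_sum_fubini_sq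
    _ = _ := sum_fubini_sq_numCycles n
end

section
/- For all m, n ≥ 0: |Genmat01_m[n]| = Σ_{k=0}^{n} Σ_{i=0}^{k} (-1)^i C(k,i) · C(m(k-i), n). -/
/-!
A 0/1 matrix is the indicator matrix of its support, so the matrices counted by
`Genmat01Card m n` with `k` columns are the `n`-subsets of `Fin m × Fin k` meeting every column,
and such subsets exist only for `k ≤ n`. Inclusion–exclusion over the set of columns forced
to be empty counts them: the `n`-subsets avoiding a given set of `i` columns number
`C(m(k - i), n)`, and there are `C(k, i)` such sets of columns.
-/

open Finset

noncomputable def Genmat01Card (m n : ℕ) : ℕ :=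
  Set.ncard {p : Σ k : ℕ, Matrix (Fin m) (Fin k) ℕ |
    (∑ i, ∑ j, p.2 i j) = n ∧ (∀ i j, p.2 i j ≤ 1) ∧ ∀ j, ∃ i, 0 < p.2 i j}

variable {α β : Type*} [DecidableEq α] [DecidableEq β]

def indicatorMatrix (s : Finset (α × β)) : Matrix α β ℕ :=
  Matrix.of fun a b => if (a, b) ∈ s then 1 else 0

lemma indicatorMatrix_injective : Function.Injective (indicatorMatrix (α := α) (β := β)) := by
  intro s t h
  ext ⟨a, b⟩
  have hab := congrFun₂ h a b
  simp only [indicatorMatrix, Matrix.of_apply] at hab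
  split_ifs at hab <;> simp_all

lemma sum_indicatorMatrix [Fintype α] [Fintype β] (s : Finset (α × β)) :
    ∑ a, ∑ b, indicatorMatrix s a b = #s := by
  simp only [indicatorMatrix, Matrix.of_apply]
  rw [← Fintype.sum_prod_type' (fun a b => if (a, b) ∈ s then 1 else 0)]
  simp

lemma indicatorMatrix_le_one (s : Finset (α × β)) (a : α) (b : β) :
    indicatorMatrix s a b ≤ 1 := by
  simp only [indicatorMatrix, Matrix.of_apply]; split <;> simp

lemma indicatorMatrix_pos_iff {s : Finset (α × β)} {a : α} {b : β} :
    0 < indicatorMatrix s a b ↔ (a, b) ∈ s := by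
  simp only [indicatorMatrix, Matrix.of_apply]; split <;> simp_all

variable [Fintype α] [Fintype β]

lemma exists_indicatorMatrix_eq {M : Matrix α β ℕ} (hM : ∀ a b, M a b ≤ 1) :
    ∃ s, indicatorMatrix s = M := by
  refine ⟨univ.filter fun p => M p.1 p.2 = 1, funext₂ fun a b => ?_⟩
  have := hM a b
  simp only [indicatorMatrix, Matrix.of_apply, mem_filter, mem_univ, true_and]
  split <;> omega

variable (α β) in
def columnCovers (n : ℕ) : Finset (Finset (α × β)) :=
  (powersetCard n univ).filter fun s => ∀ b, ∃ a, (a, b) ∈ s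

lemma mem_columnCovers {n : ℕ} {s : Finset (α × β)} :
    s ∈ columnCovers α β n ↔ #s = n ∧ ∀ b, ∃ a, (a, b) ∈ s := by
  simp [columnCovers]

lemma card_le_of_mem_columnCovers {n : ℕ} {s : Finset (α × β)}
    (hs : s ∈ columnCovers α β n) :
    Fintype.card β ≤ n := by
  obtain ⟨rfl, hcov⟩ := mem_columnCovers.1 hs
  calc Fintype.card β = #(s.image Prod.snd) := by
        rw [← card_univ]; congr 1; ext b; simpa [eq_comm] using hcov b
    _ ≤ #s := card_image_le

variable (α) in
def avoidingColumn (b : β) : Finset (Finset (α × β)) :=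
  (univ ×ˢ {b}ᶜ).powerset

variable (α) in
lemma inf_avoidingColumn (t : Finset β) :
    t.inf (avoidingColumn α) = (univ ×ˢ tᶜ).powerset := by
  ext s
  simp only [avoidingColumn, mem_inf, mem_powerset, subset_iff, mem_product, mem_univ, true_and,
    mem_compl, mem_singleton]
  exact ⟨fun h p hp hpt => h _ hpt hp rfl, fun h b hb p hp hpb => h hp (hpb ▸ hb)⟩

lemma filter_inf_compl_avoidingColumn (n : ℕ) :
    (univ.inf fun b => (avoidingColumn α b)ᶜ).filter (#· = n) = columnCovers α β n := by
  ext s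
  simp [avoidingColumn, mem_inf, mem_columnCovers, subset_iff, and_comm]

variable (α β) in
theorem card_columnCovers (n : ℕ) :
    (#(columnCovers α β n) : ℤ) = ∑ i ∈ range (Fintype.card β + 1),
      (-1 : ℤ) ^ i * (Fintype.card β).choose i *
        (Fintype.card α * (Fintype.card β - i)).choose n := by
  let f : Finset (α × β) → ℤ := fun s => if #s = n then 1 else 0
  have hf (S : Finset (Finset (α × β))) : ∑ s ∈ S, f s = #(S.filter (#· = n)) := by
    simp [f, sum_boole]
  calc (#(columnCovers α β n) : ℤ)
      = ∑ s ∈ univ.inf fun b => (avoidingColumn α b)ᶜ, f s := by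
        rw [hf, filter_inf_compl_avoidingColumn]
    _ = ∑ t : Finset β,
          (-1) ^ #t * ((Fintype.card α * (Fintype.card β - #t)).choose n : ℤ) := by
        rw [inclusion_exclusion_sum_inf_compl, ← powerset_univ]
        refine sum_congr rfl fun t _ => ?_
        rw [inf_avoidingColumn, hf, ← powersetCard_eq_filter, card_powersetCard, card_product,
          card_compl, card_univ, smul_eq_mul]
    _ = _ := by
        rw [← powerset_univ, sum_powerset_apply_card
          (fun i => (-1 : ℤ) ^ i * (Fintype.card α * (Fintype.card β - i)).choose n), card_univ]
        exact sum_congr rfl fun i _ => by rw [nsmul_eq_mul, mul_left_comm, mul_assoc]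

theorem genmat01Card_eq_sum_card_columnCovers (m n : ℕ) :
    Genmat01Card m n = ∑ k ∈ range (n + 1), #(columnCovers (Fin m) (Fin k) n) := by
  have hset : {p : Σ k : ℕ, Matrix (Fin m) (Fin k) ℕ |
      (∑ i, ∑ j, p.2 i j) = n ∧ (∀ i j, p.2 i j ≤ 1) ∧ ∀ j, ∃ i, 0 < p.2 i j} =
      Sigma.map id (fun _ => indicatorMatrix) ''
        (((range (n + 1)).sigma fun k => columnCovers (Fin m) (Fin k) n :
          Finset (Σ k : ℕ, Finset (Fin m × Fin k))) :
          Set (Σ k : ℕ, Finset (Fin m × Fin k))) := by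
    ext ⟨k, M⟩
    simp only [Set.mem_ofPred_eq]
    constructor
    · rintro ⟨hsum, hle, hcov⟩
      obtain ⟨s, rfl⟩ := exists_indicatorMatrix_eq hle
      have hs : s ∈ columnCovers _ _ n := by
        rw [sum_indicatorMatrix] at hsum
        simp only [indicatorMatrix_pos_iff] at hcov
        exact mem_columnCovers.2 ⟨hsum, hcov⟩
      have hk : k < n + 1 := by simpa using Nat.lt_succ_of_le (card_le_of_mem_columnCovers hs)
      exact ⟨⟨k, s⟩, mem_sigma.2 ⟨mem_range.2 hk, hs⟩, rfl⟩
    · rintro ⟨⟨k, s⟩, hs, h⟩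
      cases h
      obtain ⟨hcard, hcov⟩ := mem_columnCovers.1 (mem_sigma.1 hs).2
      exact ⟨(sum_indicatorMatrix s).trans hcard, indicatorMatrix_le_one s,
        fun j => by simpa [indicatorMatrix_pos_iff] using hcov j⟩
  rw [Genmat01Card, hset, Set.ncard_image_of_injective _
      (Function.injective_id.sigma_map fun _ => indicatorMatrix_injective),
    Set.ncard_coe_finset, card_sigma]

theorem genmat01_card_sign_reversing (m n : ℕ) :
    (Genmat01Card m n : ℤ) =
      ∑ k ∈ Finset.range (n + 1), ∑ i ∈ Finset.range (k + 1),
        (-1 : ℤ) ^ i * k.choose i * (m * (k - i)).choose n := by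
  rw [genmat01Card_eq_sum_card_columnCovers]
  push_cast
  refine sum_congr rfl fun k _ => ?_
  simpa using card_columnCovers (Fin m) (Fin k) n
end
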